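/- arXiv:1605.07686 — 2 statements merged into one kernel-verified Lean document; each statement's English description precedes it below -/
import Mathlib

section
/- Let ε₁,...,εₙ be i.i.d. standard Gumbel random variables (CDF F(t)=exp(−exp(−t))) and a₁,...,aₙ ∈ ℝ. Then max_i (a_i + ε_i) has the Gumbel distribution with CDF t ↦ exp(−exp(−(t − log Σ_i exp(a_i)))). -/
/-!
The event `max_i (a i + ε i) ≤ t` is the intersection of the independent events
`ε i ≤ t - a i`, so its probability is `∏ i, exp (-exp (a i - t)) = exp (-exp (-t) * ∑ i, exp (a i))`,
and `exp (-t) * ∑ i, exp (a i) = exp (-(t - log ∑ i, exp (a i)))`.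
-/

open MeasureTheory Real Finset

noncomputable def gumbelCDF (m t : ℝ) : ℝ := exp (-exp (-(t - m)))

lemma gumbelCDF_nonneg (m t : ℝ) : 0 ≤ gumbelCDF m t := (exp_pos _).le

lemma prod_gumbelCDF {ι : Type*} [Fintype ι] [Nonempty ι] (a : ι → ℝ) (t : ℝ) :
    ∏ i, gumbelCDF (a i) t = gumbelCDF (log (∑ i, exp (a i))) t := by
  have hpos : 0 < ∑ i, exp (a i) := sum_pos (fun i _ => exp_pos _) univ_nonempty
  have hsum : ∑ i, exp (-(t - a i)) = exp (-(t - log (∑ i, exp (a i)))) := by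
    simp only [neg_sub, exp_sub, exp_log hpos, sum_div]
  simp only [gumbelCDF, ← exp_sum, sum_neg_distrib, hsum]

lemma setOf_sup'_add_le {ι Ω : Type*} [Fintype ι] (h : (univ : Finset ι).Nonempty)
    (a : ι → ℝ) (X : ι → Ω → ℝ) (t : ℝ) :
    {ω | univ.sup' h (fun i => a i + X i ω) ≤ t} = ⋂ i, {ω | X i ω ≤ t - a i} := by
  ext ω
  simp only [Set.mem_ofPred_eq, Set.mem_iInter, sup'_le_iff, mem_univ, true_implies,
    le_sub_iff_add_le']

theorem gumbel_max_stability_general {n : ℕ} (hn : 0 < n)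
    {Ω : Type*} [MeasurableSpace Ω] (μ : Measure Ω) [IsProbabilityMeasure μ]
    (a : Fin n → ℝ) (ε : Fin n → Ω → ℝ)
    (hindep : ProbabilityTheory.iIndepFun ε μ)
    (hcdf : ∀ i t, μ {ω | ε i ω ≤ t} = ENNReal.ofReal (Real.exp (-Real.exp (-t))))
    (t : ℝ) :
    μ {ω | (Finset.univ.sup' (Finset.univ_nonempty_iff.mpr ⟨⟨0, hn⟩⟩)
        fun i => a i + ε i ω) ≤ t} =
      ENNReal.ofReal (Real.exp (-Real.exp (-(t - Real.log (∑ i, Real.exp (a i)))))) := by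
  have : Nonempty (Fin n) := ⟨⟨0, hn⟩⟩
  rw [setOf_sup'_add_le, hindep.meas_iInter (s := fun i => {ω | ε i ω ≤ t - a i})
    fun i => ⟨Set.Iic (t - a i), measurableSet_Iic, rfl⟩]
  calc ∏ i, μ {ω | ε i ω ≤ t - a i}
      = ∏ i, ENNReal.ofReal (gumbelCDF (a i) t) := prod_congr rfl fun i _ => hcdf i (t - a i)
    _ = ENNReal.ofReal (gumbelCDF (log (∑ i, exp (a i))) t) := by
      rw [← ENNReal.ofReal_prod_of_nonneg fun i _ => gumbelCDF_nonneg _ _, prod_gumbelCDF]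

/-- **Max-stability of the Gumbel distribution.** If `ε 1, ..., ε n` are i.i.d.
standard Gumbel (CDF `exp (-exp (-t))`) and `a i ∈ ℝ`, then `max_i (a i + ε i)`
is Gumbel with CDF `t ↦ exp (-exp (-(t - log (∑ i, exp (a i)))))`. -/
theorem gumbel_max_stability {n : ℕ} (hn : 0 < n)
    {Ω : Type*} [MeasurableSpace Ω] (μ : Measure Ω) [IsProbabilityMeasure μ]
    (a : Fin n → ℝ) (ε : Fin n → Ω → ℝ) (hmeas : ∀ i, Measurable (ε i))
    (hindep : ProbabilityTheory.iIndepFun ε μ)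
    (hcdf : ∀ i t, μ {ω | ε i ω ≤ t} = ENNReal.ofReal (Real.exp (-Real.exp (-t))))
    (t : ℝ) :
    μ {ω | (Finset.univ.sup' (Finset.univ_nonempty_iff.mpr ⟨⟨0, hn⟩⟩)
        fun i => a i + ε i ω) ≤ t} =
      ENNReal.ofReal (Real.exp (-Real.exp (-(t - Real.log (∑ i, Real.exp (a i)))))) :=
  gumbel_max_stability_general hn μ a ε hindep hcdf t
end

section
/- Let Y = Y₁ × ⋯ × Yₙ with each Yⱼ finite and nonempty, let θ : Y → ℝ, and let 𝓑 = {β₁,...,β_m} be pairwise disjoint subsets of {1,...,n}. Perturb θ by ~θ(y) = θ(y) + Σ_{β∈𝓑} ε(y_β), where for each β ∈ 𝓑 and each configuration y_β ∈ ∏_{j∈β} Yⱼ, the ε(y_β) are independent zero-mean Gumbel random variables. Then for every fixed y ∈ Y, the probability that y is a block-coordinate-wise maximum of ~θ over the blocks 𝓑 (i.e., for each β ∈ 𝓑, y_β ∈ argmax_{y'_β} ~θ(y'_β, y_{¬β})) equals ∏_{β∈𝓑} p(y_β | y_{¬β}; θ), where p(y_β | y_{¬β}; θ) = exp(θ(y))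 / Σ_{y'_β} exp(θ(y'_β, y_{¬β})). -/
/-!
Since the blocks are disjoint, changing `y` on the block `β` changes only the perturbation
`ε_β`, so `y` is a block-wise maximum iff, for every block `β`,
`θ(y'_β, y_{¬β}) + ε_β(y'_β) ≤ θ(y) + ε_β(y_β)` for all `y'_β`. These events involve disjoint
families of independent perturbations, hence are independent, and each has probability
`p(y_β | y_{¬β}; θ)` by the Gumbel-max trick.

For the Gumbel-max trick, condition on the perturbation `G` of the candidate `i₀`: the others
must satisfy `Gᵢ ≤ G + aᵢ₀ - aᵢ`, which happens with probability `exp (-S e^{-(G + γ)})`, where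
`S = ∑_{i ≠ i₀} e^{aᵢ - aᵢ₀}`. As `e^{-(G + γ)}` is `Exp(1)`-distributed, the expectation of this
is `1 / (1 + S) = e^{aᵢ₀} / ∑ᵢ e^{aᵢ}`.
-/

open MeasureTheory Real Finset

/-- Replace the coordinates of `y` inside the block `B` by the values given by `z`. -/
def blockUpd {n : ℕ} {Y : Fin n → Type*} (B : Finset (Fin n)) (y : ∀ j, Y j)
    (z : ∀ j : {j // j ∈ B}, Y j.1) : ∀ j, Y j :=
  fun j => if h : j ∈ B then z ⟨j, h⟩ else y j

namespace ProbabilityTheory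

theorem iIndepFun.curry {Ω ι : Type*} {mΩ : MeasurableSpace Ω} {P : Measure Ω}
    {κ : ι → Type*} {𝓧 : ∀ i, κ i → Type*} {m𝓧 : ∀ i j, MeasurableSpace (𝓧 i j)}
    {X : ∀ i j, Ω → 𝓧 i j} (mX : ∀ i j, Measurable (X i j))
    (h : iIndepFun (fun p : (i : ι) × κ i => X p.1 p.2) P) :
    iIndepFun (fun i ω j => X i j ω) P := by
  have := h.isProbabilityMeasure
  have _ i j := Measure.isProbabilityMeasure_map (μ := P) (mX i j).aemeasurable
  have hblock (i : ι) : P.map (fun ω j => X i j ω) = Measure.infinitePi fun j => P.map (X i j) :=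
    (h.precomp sigma_mk_injective).map_fun_eq_infinitePi_map (mX i)
  rw [iIndepFun_iff_map_fun_eq_infinitePi_map fun i => measurable_pi_lambda _ (mX i)]
  simp_rw [hblock]
  rw [← Measure.infinitePi_map_piCurry, ← h.map_fun_eq_infinitePi_map fun p => mX p.1 p.2,
    Measure.map_map (MeasurableEquiv.measurable _) (measurable_pi_lambda _ fun p => mX p.1 p.2)]
  rfl

theorem IndepFun.measure_preimage_eq_lintegral {Ω α β : Type*} {mΩ : MeasurableSpace Ω}
    {mα : MeasurableSpace α} {mβ : MeasurableSpace β} {μ : Measure Ω} [IsFiniteMeasure μ]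
    {X : Ω → α} {Y : Ω → β} (hX : Measurable X) (hY : Measurable Y) (h : IndepFun X Y μ)
    {W : Set (α × β)} (hW : MeasurableSet W) :
    μ ((fun ω => (X ω, Y ω)) ⁻¹' W) = ∫⁻ x, μ.map Y (Prod.mk x ⁻¹' W) ∂μ.map X := by
  rw [← Measure.map_apply (hX.prodMk hY) hW,
    (indepFun_iff_map_prod_eq_prod_map_map hX.aemeasurable hY.aemeasurable).1 h,
    Measure.prod_apply hW]

end ProbabilityTheory

open Set ProbabilityTheory

local notation "γ" => eulerMascheroniConstant

noncomputable section

/-- The law `Exp(1)` (that is, `expMeasure 1`), written with support `Ioi 0` so that `log` is only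
taken of positive reals below. -/
def stdExpMeasure : Measure ℝ :=
  (volume.restrict (Ioi 0)).withDensity fun u => ENNReal.ofReal (exp (-u))

def gumbelMeasure : Measure ℝ :=
  stdExpMeasure.map fun u => -log u - γ

end

theorem lintegral_exp_neg_mul_Ioi {b : ℝ} (hb : 0 < b) (a : ℝ) :
    ∫⁻ u in Ioi a, ENNReal.ofReal (exp (-b * u)) = ENNReal.ofReal (exp (-b * a) / b) := by
  rw [← ofReal_integral_eq_lintegral_ofReal (integrableOn_exp_mul_Ioi (neg_neg_of_pos hb) a)
    (ae_of_all _ fun u => (exp_pos _).le), integral_exp_mul_Ioi (neg_neg_of_pos hb),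
    neg_div_neg_eq]

instance : IsProbabilityMeasure stdExpMeasure where
  measure_univ := by
    simpa [stdExpMeasure] using lintegral_exp_neg_mul_Ioi one_pos 0

theorem measurable_neg_log_sub (c : ℝ) : Measurable fun u : ℝ => -log u - c := by
  fun_prop

instance : IsProbabilityMeasure gumbelMeasure :=
  Measure.isProbabilityMeasure_map (measurable_neg_log_sub γ).aemeasurable

theorem gumbelMeasure_Iic (t : ℝ) :
    gumbelMeasure (Iic t) = ENNReal.ofReal (exp (-exp (-(t + γ)))) := by
  have hmeas : MeasurableSet ((fun u => -log u - γ) ⁻¹' Iic t) :=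
    measurable_neg_log_sub γ measurableSet_Iic
  have hpre : (fun u => -log u - γ) ⁻¹' Iic t ∩ Ioi 0 = Ici (exp (-(t + γ))) := by
    ext u
    simp only [Set.mem_inter_iff, Set.mem_preimage, Set.mem_Iic, Set.mem_Ioi, Set.mem_Ici]
    constructor
    · rintro ⟨h, hu⟩
      rw [← exp_log hu]
      exact exp_le_exp.2 (by linarith)
    · intro h
      have hu := (exp_pos _).trans_le h
      exact ⟨by linarith [(le_log_iff_exp_le hu).2 h], hu⟩
  rw [gumbelMeasure, Measure.map_apply (measurable_neg_log_sub γ) measurableSet_Iic,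
    stdExpMeasure, withDensity_apply _ hmeas, Measure.restrict_restrict hmeas, hpre,
    ← restrict_Ioi_eq_restrict_Ici]
  simpa using lintegral_exp_neg_mul_Ioi one_pos (exp (-(t + γ)))

theorem lintegral_exp_neg_mul_exp_gumbelMeasure {S : ℝ} (hS : 0 ≤ S) :
    ∫⁻ t, ENNReal.ofReal (exp (-(S * exp (-(t + γ))))) ∂gumbelMeasure =
      ENNReal.ofReal (1 / (1 + S)) := by
  have hsubst : ∀ u ∈ Ioi (0 : ℝ), ENNReal.ofReal (exp (-u)) *
      ENNReal.ofReal (exp (-(S * exp (-(-log u - γ + γ))))) =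
      ENNReal.ofReal (exp (-(1 + S) * u)) := by
    intro u hu
    rw [← ENNReal.ofReal_mul (exp_pos _).le, ← exp_add, sub_add_cancel, neg_neg, exp_log hu]
    ring_nf
  rw [gumbelMeasure, lintegral_map (by fun_prop) (measurable_neg_log_sub γ), stdExpMeasure,
    lintegral_withDensity_eq_lintegral_mul _ (by fun_prop) (by fun_prop)]
  simp only [Pi.mul_apply]
  rw [setLIntegral_congr_fun measurableSet_Ioi hsubst]
  simpa using lintegral_exp_neg_mul_Ioi (b := 1 + S) (by positivity) 0

theorem map_eq_gumbelMeasure {Ω : Type*} [MeasurableSpace Ω] {μ : Measure Ω} [IsFiniteMeasure μ]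
    {X : Ω → ℝ} (hX : Measurable X)
    (hcdf : ∀ t, μ {ω | X ω ≤ t} = ENNReal.ofReal (exp (-exp (-(t + γ))))) :
    μ.map X = gumbelMeasure :=
  Measure.ext_of_Iic _ _ fun t => by
    rw [Measure.map_apply hX measurableSet_Iic, gumbelMeasure_Iic]
    exact hcdf t

theorem pi_gumbelMeasure_pi_Iic {ι : Type*} [Fintype ι] (t : ℝ) (d : ι → ℝ) :
    (Measure.pi fun _ : ι => gumbelMeasure) (univ.pi fun i => Iic (t + d i)) =
      ENNReal.ofReal (exp (-((∑ i, exp (-d i)) * exp (-(t + γ))))) := by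
  simp only [Measure.pi_pi, gumbelMeasure_Iic]
  rw [← ENNReal.ofReal_prod_of_nonneg fun _ _ => (exp_pos _).le, ← exp_sum, Finset.sum_mul,
    ← Finset.sum_neg_distrib]
  congr 2
  refine Finset.sum_congr rfl fun i _ => ?_
  rw [← exp_add]
  ring_nf

theorem gumbel_max_trick {Ω ι : Type*} [MeasurableSpace Ω] {μ : Measure Ω}
    [IsProbabilityMeasure μ] [Fintype ι] {X : ι → Ω → ℝ}
    (hX : ∀ i, Measurable (X i)) (hind : iIndepFun X μ)
    (hlaw : ∀ i, μ.map (X i) = gumbelMeasure) (a : ι → ℝ) (i₀ : ι) :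
    μ {ω | ∀ i, a i + X i ω ≤ a i₀ + X i₀ ω} =
      ENNReal.ofReal (exp (a i₀) / ∑ i, exp (a i)) := by
  classical
  set rest : Finset ι := {i₀}ᶜ
  set R : Ω → rest → ℝ := fun ω j => X j ω
  have hR : Measurable R := measurable_pi_lambda _ fun j => hX j
  have hindep : IndepFun (X i₀) R μ :=
    (hind.indepFun_finset {i₀} rest disjoint_compl_right hX).comp
      (measurable_pi_apply (⟨i₀, Finset.mem_singleton_self i₀⟩ : ({i₀} : Finset ι)))
      measurable_id
  have hlawR : μ.map R = Measure.pi fun _ => gumbelMeasure := by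
    rw [iIndepFun.map_fun_eq_pi_map (f := fun j : rest => X j) (fun j => (hX j).aemeasurable)
      (hind.precomp Subtype.val_injective)]
    simp only [hlaw]
  set W : Set (ℝ × (rest → ℝ)) := {p | ∀ j : rest, a j + p.2 j ≤ a i₀ + p.1}
  have hW : MeasurableSet W := by
    simp only [W, Set.ofPred_forall]
    exact MeasurableSet.iInter fun j => measurableSet_le (by fun_prop) (by fun_prop)
  have hevent : {ω | ∀ i, a i + X i ω ≤ a i₀ + X i₀ ω} = (fun ω => (X i₀ ω, R ω)) ⁻¹' W := by
    ext ω
    simp only [W, R, rest, Set.mem_ofPred_eq, Set.mem_preimage]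
    refine ⟨fun h j => h j, fun h i => ?_⟩
    by_cases hi : i = i₀
    · rw [hi]
    · exact h ⟨i, by simpa using hi⟩
  have hsection (t : ℝ) : Prod.mk t ⁻¹' W = univ.pi fun j : rest => Iic (t + (a i₀ - a j)) := by
    ext v
    simp only [W, Set.mem_preimage, Set.mem_ofPred_eq, Set.mem_pi, Set.mem_univ, Set.mem_Iic,
      true_imp_iff]
    exact forall_congr' fun j => by constructor <;> intro h <;> linarith
  have hS : 0 ≤ ∑ j : rest, exp (-(a i₀ - a j)) := Finset.sum_nonneg fun _ _ => (exp_pos _).le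
  rw [hevent, hindep.measure_preimage_eq_lintegral (hX i₀) hR hW, hlaw, hlawR]
  simp only [hsection, pi_gumbelMeasure_pi_Iic]
  rw [lintegral_exp_neg_mul_exp_gumbelMeasure hS, Fintype.sum_eq_add_sum_compl i₀,
    Finset.sum_coe_sort rest fun j => exp (-(a i₀ - a j))]
  simp only [rest, neg_sub, exp_sub, ← Finset.sum_div]
  field_simp

section BlockUpdate

variable {n : ℕ} {Y : Fin n → Type*}

theorem blockUpd_restrict (B : Finset (Fin n)) (y : ∀ j, Y j) :
    blockUpd B y (fun j => y j.1) = y := by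
  funext j
  by_cases h : j ∈ B <;> simp [blockUpd, h]

theorem restrict_blockUpd_self (B : Finset (Fin n)) (y : ∀ j, Y j)
    (z : ∀ j : {j // j ∈ B}, Y j.1) :
    (fun j : {j // j ∈ B} => blockUpd B y z j.1) = z := by
  funext j
  simp [blockUpd, j.2]

theorem restrict_blockUpd_of_disjoint {B C : Finset (Fin n)} (h : Disjoint C B) (y : ∀ j, Y j)
    (z : ∀ j : {j // j ∈ B}, Y j.1) :
    (fun j : {j // j ∈ C} => blockUpd B y z j.1) = fun j : {j // j ∈ C} => y j.1 := by
  funext j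
  simp [blockUpd, Finset.disjoint_left.1 h j.2]

theorem sum_blockUpd_eq {κ : Type*} [Fintype κ] {β : κ → Finset (Fin n)}
    (hdisj : ∀ k l, k ≠ l → Disjoint (β k) (β l))
    (f : ∀ k, ((j : {j // j ∈ β k}) → Y j.1) → ℝ) (y : ∀ j, Y j) (k : κ)
    (z : ∀ j : {j // j ∈ β k}, Y j.1) :
    ∑ l, f l (fun j => blockUpd (β k) y z j.1) =
      ∑ l, f l (fun j => y j.1) + (f k z - f k (fun j => y j.1)) := by
  rw [← sub_eq_iff_eq_add', ← Finset.sum_sub_distrib, Finset.sum_eq_single k,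
    restrict_blockUpd_self]
  · intro l _ hl
    rw [restrict_blockUpd_of_disjoint (hdisj l k hl), sub_self]
  · simp

end BlockUpdate

theorem local_perturb_and_map_general {n m : ℕ} {Y : Fin n → Type*}
    [∀ j, Fintype (Y j)]
    (θ : (∀ j, Y j) → ℝ)
    (β : Fin m → Finset (Fin n))
    (hdisj : ∀ k l, k ≠ l → Disjoint (β k) (β l))
    {Ω : Type*} [MeasurableSpace Ω] (μ : Measure Ω) [IsProbabilityMeasure μ]
    (ε : (k : Fin m) → ((j : {j // j ∈ β k}) → Y j.1) → Ω → ℝ)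
    (hmeas : ∀ k z, Measurable (ε k z))
    (hindep : ProbabilityTheory.iIndepFun
      (fun (p : Σ k : Fin m, ((j : {j // j ∈ β k}) → Y j.1)) => ε p.1 p.2) μ)
    (hcdf : ∀ k z t, μ {ω | ε k z ω ≤ t} =
      ENNReal.ofReal (Real.exp (-Real.exp (-(t + Real.eulerMascheroniConstant)))))
    (y : ∀ j, Y j) :
    μ {ω | ∀ k, ∀ z : (j : {j // j ∈ β k}) → Y j.1,
        θ (blockUpd (β k) y z) + ∑ l, ε l (fun j => blockUpd (β k) y z j.1) ω ≤
          θ y + ∑ l, ε l (fun j => y j.1) ω} =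
      ∏ k, ENNReal.ofReal (Real.exp (θ y) /
        ∑ z : (j : {j // j ∈ β k}) → Y j.1, Real.exp (θ (blockUpd (β k) y z))) := by
  set B : ∀ k, Set (((j : {j // j ∈ β k}) → Y j.1) → ℝ) := fun k =>
    {v | ∀ z, θ (blockUpd (β k) y z) + v z ≤
      θ (blockUpd (β k) y fun j => y j.1) + v fun j => y j.1}
  have hB (k : Fin m) : MeasurableSet (B k) := by
    simp only [B, Set.ofPred_forall]
    exact MeasurableSet.iInter fun z => measurableSet_le (by fun_prop) (by fun_prop)
  calc _ = μ (⋂ k, (fun ω z => ε k z ω) ⁻¹' B k) := by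
        congr 1
        ext ω
        simp only [B, blockUpd_restrict, sum_blockUpd_eq hdisj (fun l z => ε l z ω),
          Set.mem_iInter, Set.mem_preimage, Set.mem_ofPred_eq]
        exact forall_congr' fun k => forall_congr' fun z => by
          constructor <;> intro h <;> linarith
    _ = ∏ k, μ ((fun ω z => ε k z ω) ⁻¹' B k) :=
        (hindep.curry hmeas).meas_iInter fun k => ⟨B k, hB k, rfl⟩
    _ = _ := Finset.prod_congr rfl fun k _ => by
        rw [← congrArg θ (blockUpd_restrict (β k) y)]
        exact gumbel_max_trick (hmeas k) (hindep.precomp (g := Sigma.mk k) sigma_mk_injective)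
          (fun z => map_eq_gumbelMeasure (hmeas k z) (hcdf k z)) _ _

/-- **Local Perturb-and-MAP (main theorem).** Perturb `θ` by independent zero-mean Gumbel
noise `ε k z` attached to each block `β k` and each block configuration `z`. Then for any
fixed configuration `y`, the probability that `y` is a block-coordinate-wise maximum of the
perturbed potential equals the composite likelihood `∏ k, p(y_{β k} | y_{¬β k}; θ)`. -/
theorem local_perturb_and_map {n m : ℕ} {Y : Fin n → Type*}
    [∀ j, Fintype (Y j)] [∀ j, Nonempty (Y j)] [∀ j, DecidableEq (Y j)]
    (θ : (∀ j, Y j) → ℝ)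
    (β : Fin m → Finset (Fin n))
    (hdisj : ∀ k l, k ≠ l → Disjoint (β k) (β l))
    {Ω : Type*} [MeasurableSpace Ω] (μ : Measure Ω) [IsProbabilityMeasure μ]
    (ε : (k : Fin m) → ((j : {j // j ∈ β k}) → Y j.1) → Ω → ℝ)
    (hmeas : ∀ k z, Measurable (ε k z))
    (hindep : ProbabilityTheory.iIndepFun
      (fun (p : Σ k : Fin m, ((j : {j // j ∈ β k}) → Y j.1)) => ε p.1 p.2) μ)
    (hcdf : ∀ k z t, μ {ω | ε k z ω ≤ t} =
      ENNReal.ofReal (Real.exp (-Real.exp (-(t + Real.eulerMascheroniConstant)))))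
    (y : ∀ j, Y j) :
    μ {ω | ∀ k, ∀ z : (j : {j // j ∈ β k}) → Y j.1,
        θ (blockUpd (β k) y z) + ∑ l, ε l (fun j => blockUpd (β k) y z j.1) ω ≤
          θ y + ∑ l, ε l (fun j => y j.1) ω} =
      ∏ k, ENNReal.ofReal (Real.exp (θ y) /
        ∑ z : (j : {j // j ∈ β k}) → Y j.1, Real.exp (θ (blockUpd (β k) y z))) :=
  local_perturb_and_map_general θ β hdisj μ ε hmeas hindep hcdf y
end
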